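/- arXiv:1804.09471 — 2 statements merged into one kernel-verified Lean document; each statement's English description precedes it below -/
import Mathlib

section
/- Let w : [0,T] → ℝ be continuous and nonvanishing with w(t) > 0 on (0,T], and let x, y, z : [0,T] → ℝ be C¹ functions with x(0) = y(0) = z(0) = 0 satisfying the Engel curve equations y'(t) = z(t) x'(t) and z'(t) = w(t) x'(t) for all t, where moreover the curve parameter satisfies w(t) = t. If y(T) = 0, then z ≡ 0, y ≡ 0, and x ≡ 0 on [0,T]. (Bryant–Hsu rigidity via Inaba's computation.) -/
open Set Filter Topology

/-!
Inaba's functional `H(t) = y(t) - z(t)² / (2t)` satisfies `H' = z² / (2t²) ≥ 0` along the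
curve, because the two Engel equations make the `z·x'` terms cancel. Since `z(0) = 0`,
`z(t)²/t → 0` and `H` extends continuously by `H(0) = 0`, while `H(T) = -z(T)²/(2T) ≤ 0`.
A monotone function with `H(T) ≤ H(0) = 0` vanishes, so `H' = 0`, i.e. `z ≡ 0`; then
`t·x' = z' = 0` and `y' = z·x' = 0`.
-/

theorem HasDerivAt.continuousAt_slope {f : ℝ → ℝ} {a : ℝ} (hf : HasDerivAt f 0 a) :
    ContinuousAt (slope f a) a :=
  continuousWithinAt_compl_self.mp <| by
    rw [ContinuousWithinAt, slope_same]
    exact hf.tendsto_slope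

theorem HasDerivAt.eq_zero_of_eventuallyEq_const {f : ℝ → ℝ} {f' a c : ℝ}
    (hf : HasDerivAt f f' a) (hc : f =ᶠ[𝓝 a] fun _ => c) : f' = 0 :=
  hf.unique ((hasDerivAt_const a c).congr_of_eventuallyEq hc)

theorem eq_of_forall_mem_Ioo_hasDerivAt_zero {f : ℝ → ℝ} {a b : ℝ}
    (hf : ContinuousOn f (Icc a b)) (hf' : ∀ t ∈ Ioo a b, HasDerivAt f 0 t) :
    ∀ t ∈ Icc a b, f t = f a := by
  rintro t ⟨hat, htb⟩
  rcases hat.eq_or_lt with rfl | hat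
  · rfl
  obtain ⟨c, -, hc⟩ := exists_hasDerivAt_eq_slope f (fun _ => 0) hat
    (hf.mono (Icc_subset_Icc_right htb)) fun s hs => hf' s ⟨hs.1, hs.2.trans_le htb⟩
  rw [eq_comm, div_eq_zero_iff, sub_eq_zero, sub_eq_zero] at hc
  exact hc.resolve_right hat.ne'

/-- At `t = 0` the junk value `z 0 ^ 2 / 0 = 0` is the continuous extension when `z 0 = 0`. -/
noncomputable def inabaFunctional (y z : ℝ → ℝ) (t : ℝ) : ℝ := y t - z t ^ 2 / (2 * t)

theorem hasDerivAt_inabaFunctional {y z : ℝ → ℝ} {t a : ℝ} (ht : t ≠ 0)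
    (hy : HasDerivAt y (z t * a) t) (hz : HasDerivAt z (t * a) t) :
    HasDerivAt (inabaFunctional y z) (z t ^ 2 / (2 * t ^ 2)) t := by
  have h2t : HasDerivAt (fun s : ℝ => 2 * s) 2 t := by
    simpa using (hasDerivAt_id t).const_mul (2 : ℝ)
  refine (hy.sub ((hz.fun_pow 2).div h2t (mul_ne_zero two_ne_zero ht))).congr_deriv ?_
  field_simp
  ring

theorem continuousAt_inabaFunctional_zero {y z : ℝ → ℝ} {z₀' : ℝ} (hy : ContinuousAt y 0)
    (hz : HasDerivAt z z₀' 0) (hz0 : z 0 = 0) :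
    ContinuousAt (inabaFunctional y z) 0 := by
  have hz2 : HasDerivAt (fun t => z t ^ 2 / 2) 0 0 := by
    simpa [hz0] using (hz.fun_pow 2).div_const 2
  have hH : inabaFunctional y z = fun t => y t - slope (fun t => z t ^ 2 / 2) 0 t := by
    funext t
    simp only [inabaFunctional, slope_def_field, hz0]
    ring
  rw [hH]
  exact hy.sub hz2.continuousAt_slope

section EngelCurve

variable {T : ℝ} {x' y z : ℝ → ℝ}
  (hy : ∀ t ∈ Icc 0 T, HasDerivAt y (z t * x' t) t)
  (hz : ∀ t ∈ Icc 0 T, HasDerivAt z (t * x' t) t)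
  (hz0 : z 0 = 0)

include hy hz hz0

theorem monotoneOn_inabaFunctional : MonotoneOn (inabaFunctional y z) (Icc 0 T) := by
  have hderiv : ∀ t ∈ Ioo 0 T,
      HasDerivAt (inabaFunctional y z) (z t ^ 2 / (2 * t ^ 2)) t := fun t ht =>
    hasDerivAt_inabaFunctional ht.1.ne' (hy t (Ioo_subset_Icc_self ht))
      (hz t (Ioo_subset_Icc_self ht))
  refine monotoneOn_of_hasDerivWithinAt_nonneg (f' := fun t => z t ^ 2 / (2 * t ^ 2))
    (convex_Icc 0 T) ?_ ?_ ?_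
  · intro t ht
    rcases ht.1.eq_or_lt with rfl | ht0
    · exact (continuousAt_inabaFunctional_zero (hy 0 ht).continuousAt (hz 0 ht)
        hz0).continuousWithinAt
    · exact (hasDerivAt_inabaFunctional ht0.ne' (hy t ht) (hz t ht)).continuousAt
        |>.continuousWithinAt
  · rw [interior_Icc]
    exact fun t ht => (hderiv t ht).hasDerivWithinAt
  · intro t _
    positivity

theorem inabaFunctional_eq_zero (hy0 : y 0 = 0) (hyT : y T = 0) :
    ∀ t ∈ Icc 0 T, inabaFunctional y z t = 0 := by
  intro t ht
  have hTT : T ∈ Icc 0 T := ⟨ht.1.trans ht.2, le_rfl⟩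
  have hH0 : inabaFunctional y z 0 = 0 := by simp [inabaFunctional, hy0, hz0]
  have hHT : inabaFunctional y z T ≤ 0 := by
    have : 0 ≤ z T ^ 2 / (2 * T) := by have := hTT.1; positivity
    simp only [inabaFunctional, hyT]
    linarith
  have hmono := monotoneOn_inabaFunctional hy hz hz0
  have h1 := hmono (left_mem_Icc.mpr hTT.1) ht ht.1
  have h2 := hmono ht hTT ht.2
  linarith

theorem engel_z_eq_zero (hy0 : y 0 = 0) (hyT : y T = 0) : ∀ t ∈ Icc 0 T, z t = 0 := by
  have hH := inabaFunctional_eq_zero hy hz hz0 hy0 hyT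
  rintro t ⟨ht0, htT⟩
  rcases ht0.eq_or_lt with rfl | ht0
  · exact hz0
  rcases htT.lt_or_eq with htT | rfl
  · have hloc : inabaFunctional y z =ᶠ[𝓝 t] fun _ => 0 :=
      eventuallyEq_of_mem (Ioo_mem_nhds ht0 htT) fun s hs => hH s (Ioo_subset_Icc_self hs)
    have := (hasDerivAt_inabaFunctional ht0.ne' (hy t ⟨ht0.le, htT.le⟩)
      (hz t ⟨ht0.le, htT.le⟩)).eq_zero_of_eventuallyEq_const hloc
    simpa [ht0.ne'] using this
  · have := hH t ⟨ht0.le, le_rfl⟩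
    simpa [inabaFunctional, hyT, ht0.ne'] using this

end EngelCurve

theorem bryant_hsu_rigidity_general
    {T : ℝ}
    (x y z x' y' z' : ℝ → ℝ) (w : ℝ → ℝ) (hw : ∀ t, w t = t)
    (hx : ∀ t ∈ Icc 0 T, HasDerivAt x (x' t) t)
    (hy : ∀ t ∈ Icc 0 T, HasDerivAt y (y' t) t)
    (hz : ∀ t ∈ Icc 0 T, HasDerivAt z (z' t) t)
    (hD1 : ∀ t ∈ Icc 0 T, y' t = z t * x' t)
    (hD2 : ∀ t ∈ Icc 0 T, z' t = w t * x' t)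
    (hx0 : x 0 = 0) (hy0 : y 0 = 0) (hz0 : z 0 = 0)
    (hyT : y T = 0) :
    ∀ t ∈ Icc 0 T, z t = 0 ∧ y t = 0 ∧ x t = 0 := by
  have hy₁ : ∀ t ∈ Icc 0 T, HasDerivAt y (z t * x' t) t := fun t ht => hD1 t ht ▸ hy t ht
  have hz₁ : ∀ t ∈ Icc 0 T, HasDerivAt z (t * x' t) t := fun t ht => by
    simpa only [hD2 t ht, hw] using hz t ht
  have hz_zero := engel_z_eq_zero hy₁ hz₁ hz0 hy0 hyT
  have hx'_zero : ∀ t ∈ Ioo 0 T, x' t = 0 := fun t ht => by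
    have hloc : z =ᶠ[𝓝 t] fun _ => 0 :=
      eventuallyEq_of_mem (Ioo_mem_nhds ht.1 ht.2) fun s hs => hz_zero s (Ioo_subset_Icc_self hs)
    simpa [ht.1.ne'] using (hz₁ t (Ioo_subset_Icc_self ht)).eq_zero_of_eventuallyEq_const hloc
  have hx_const := eq_of_forall_mem_Ioo_hasDerivAt_zero (HasDerivAt.continuousOn hx)
    fun t ht => hx'_zero t ht ▸ hx t (Ioo_subset_Icc_self ht)
  have hy_const := eq_of_forall_mem_Ioo_hasDerivAt_zero (HasDerivAt.continuousOn hy₁)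
    fun t ht => by simpa [hz_zero t (Ioo_subset_Icc_self ht)] using hy₁ t (Ioo_subset_Icc_self ht)
  intro t ht
  exact ⟨hz_zero t ht, (hy_const t ht).trans hy0, (hx_const t ht).trans hx0⟩

/-- **Bryant–Hsu rigidity (via Inaba's computation).**
Let `γ(t) = (x(t), y(t), z(t), w(t))`, `t ∈ [0,T]`, be a C¹ curve in the Engel–Darboux
chart tangent to the Engel structure `𝒟 = ker(dy − z dx) ∩ ker(dz − w dx)`, i.e.
`y' = z·x'` and `z' = w·x'`, whose last coordinate is `w(t) = t` (so `w` is continuous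
and positive on `(0,T]`), starting at the origin.  If also `y(T) = 0`, then
`x ≡ y ≡ z ≡ 0` on `[0,T]`: the curve is the Cauchy characteristic through the origin. -/
theorem bryant_hsu_rigidity
    {T : ℝ} (hT : 0 < T)
    (x y z x' y' z' : ℝ → ℝ) (w : ℝ → ℝ) (hw : ∀ t, w t = t)
    (hx : ∀ t ∈ Icc 0 T, HasDerivAt x (x' t) t)
    (hy : ∀ t ∈ Icc 0 T, HasDerivAt y (y' t) t)
    (hz : ∀ t ∈ Icc 0 T, HasDerivAt z (z' t) t)
    (hx' : ContinuousOn x' (Icc 0 T))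
    (hy' : ContinuousOn y' (Icc 0 T))
    (hz' : ContinuousOn z' (Icc 0 T))
    (hD1 : ∀ t ∈ Icc 0 T, y' t = z t * x' t)
    (hD2 : ∀ t ∈ Icc 0 T, z' t = w t * x' t)
    (hx0 : x 0 = 0) (hy0 : y 0 = 0) (hz0 : z 0 = 0)
    (hyT : y T = 0) :
    ∀ t ∈ Icc 0 T, z t = 0 ∧ y t = 0 ∧ x t = 0 :=
  bryant_hsu_rigidity_general x y z x' y' z' w hw hx hy hz hD1 hD2 hx0 hy0 hz0 hyT
end

section
/- Let w : [0,T] → ℝ with w(t) = t, and let x, y, z : [0,T] → ℝ be C¹ with x(0)=y(0)=z(0)=0, y' = z x', z' = t x'. Then y(T) = z(T)²/(2T) + ∫₀ᵀ z(t)²/(2t²) dt; in particular y(T) ≥ z(T)²/(2T) ≥ 0, with equality y(T)=0 iff z ≡ 0 on [0,T]. (Inaba's integral formula for the accessible set.) -/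
/-!
Along an Engel curve (`y' = z a`, `z' = t a`) the function `y(t) - z(t)²/(2t)` has derivative
`z(t)²/(2t²)`. Since `z(0) = z'(0) = 0`, the slope `z(t)/t` tends to `0` at `0`, so both this
function and the integrand extend continuously to `t = 0` (with value `0`), and the formula is the
fundamental theorem of calculus. The integrand is continuous and nonnegative, so the integral
vanishes only if `z ≡ 0`.
-/

open Set intervalIntegral Filter Topology MeasureTheory

theorem intervalIntegral.integral_eq_zero_iff_of_continuousOn_of_nonneg {f : ℝ → ℝ}
    {a b : ℝ} (hab : a < b) (hf : ContinuousOn f (Icc a b)) (hf₀ : ∀ x ∈ Icc a b, 0 ≤ f x) :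
    ∫ x in a..b, f x = 0 ↔ EqOn f 0 (Icc a b) := by
  have hIoc : volume.restrict (Ioc a b) = volume.restrict (Icc a b) :=
    Measure.restrict_congr_set Ioc_ae_eq_Icc
  rw [integral_eq_zero_iff_of_le_of_nonneg_ae hab.le
      (by rw [hIoc]; exact ae_restrict_of_forall_mem measurableSet_Icc hf₀)
      (hf.intervalIntegrable_of_Icc hab.le), hIoc]
  exact ⟨fun h => Measure.eqOn_Icc_of_ae_eq volume hab.ne h hf continuousOn_const,
    ae_restrict_of_forall_mem measurableSet_Icc⟩

theorem tendsto_div_nhdsNE_zero_of_hasDerivAt {f : ℝ → ℝ} {c : ℝ} (hf : HasDerivAt f c 0)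
    (hf₀ : f 0 = 0) : Tendsto (fun t => f t / t) (𝓝[≠] 0) (𝓝 c) := by
  convert hasDerivAt_iff_tendsto_slope.mp hf using 2 with t
  simp [slope_def_field, hf₀]

/-- At `t = 0` the function takes the junk value `f 0 / 0 = 0`, which is also its limit there. -/
theorem ContinuousOn.div_id_of_hasDerivAt_zero {f : ℝ → ℝ} {s : Set ℝ}
    (hf : ContinuousOn f s) (hf' : HasDerivAt f 0 0) (hf₀ : f 0 = 0) :
    ContinuousOn (fun t => f t / t) s := by
  intro t ht
  rcases eq_or_ne t 0 with rfl | ht₀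
  · refine ContinuousAt.continuousWithinAt ?_
    rw [← continuousWithinAt_compl_self, ContinuousWithinAt, div_zero]
    exact tendsto_div_nhdsNE_zero_of_hasDerivAt hf' hf₀
  · exact (hf t ht).div continuousWithinAt_id ht₀

theorem ContinuousOn.sq_div_two_mul_sq_of_hasDerivAt_zero {f : ℝ → ℝ} {s : Set ℝ}
    (hf : ContinuousOn f s) (hf' : HasDerivAt f 0 0) (hf₀ : f 0 = 0) :
    ContinuousOn (fun t => f t ^ 2 / (2 * t ^ 2)) s :=
  ((hf.div_id_of_hasDerivAt_zero hf' hf₀).pow 2).div_const 2 |>.congr fun t _ => by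
    simp only [Pi.pow_apply]; ring

theorem hasDerivAt_sub_sq_div_two_mul {y z : ℝ → ℝ} {a t : ℝ} (ht : t ≠ 0)
    (hy : HasDerivAt y (z t * a) t) (hz : HasDerivAt z (t * a) t) :
    HasDerivAt (fun s => y s - z s ^ 2 / (2 * s)) (z t ^ 2 / (2 * t ^ 2)) t := by
  refine (hy.fun_sub ((hz.fun_pow 2).fun_div ((hasDerivAt_id' t).const_mul 2)
    (mul_ne_zero two_ne_zero ht))).congr_deriv ?_
  field_simp
  ring

theorem eq_sq_div_add_integral_of_engel {T : ℝ} (hT : 0 ≤ T) {y z a : ℝ → ℝ}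
    (hy : ∀ t ∈ Icc 0 T, HasDerivAt y (z t * a t) t)
    (hz : ∀ t ∈ Icc 0 T, HasDerivAt z (t * a t) t) (hy₀ : y 0 = 0) (hz₀ : z 0 = 0) :
    y T = z T ^ 2 / (2 * T) + ∫ t in (0 : ℝ)..T, z t ^ 2 / (2 * t ^ 2) := by
  have hz' : HasDerivAt z 0 0 := by simpa using hz 0 ⟨le_rfl, hT⟩
  have hzc : ContinuousOn z (Icc 0 T) := fun t ht => (hz t ht).continuousAt.continuousWithinAt
  have hyc : ContinuousOn y (Icc 0 T) := fun t ht => (hy t ht).continuousAt.continuousWithinAt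
  have hFc : ContinuousOn (fun t => y t - z t ^ 2 / (2 * t)) (Icc 0 T) :=
    (hyc.sub (((hzc.div_id_of_hasDerivAt_zero hz' hz₀).mul hzc).div_const 2)).congr
      fun t _ => by simp only [Pi.sub_apply, Pi.mul_apply]; ring
  have hFTC := integral_eq_sub_of_hasDeriv_right_of_le hT hFc
    (fun t ht => (hasDerivAt_sub_sq_div_two_mul ht.1.ne'
      (hy t (Ioo_subset_Icc_self ht)) (hz t (Ioo_subset_Icc_self ht))).hasDerivWithinAt)
    ((hzc.sq_div_two_mul_sq_of_hasDerivAt_zero hz' hz₀).intervalIntegrable_of_Icc hT)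
  rw [hFTC]
  simp [hy₀, hz₀]

theorem inaba_integral_formula_general
    {T : ℝ} (hT : 0 < T)
    (y z x' y' z' : ℝ → ℝ)
    (hy : ∀ t ∈ Icc 0 T, HasDerivAt y (y' t) t)
    (hz : ∀ t ∈ Icc 0 T, HasDerivAt z (z' t) t)
    (hD1 : ∀ t ∈ Icc 0 T, y' t = z t * x' t)
    (hD2 : ∀ t ∈ Icc 0 T, z' t = t * x' t)
    (hy0 : y 0 = 0) (hz0 : z 0 = 0) :
    (y T = z T ^ 2 / (2 * T) + ∫ t in (0 : ℝ)..T, z t ^ 2 / (2 * t ^ 2)) ∧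
    z T ^ 2 / (2 * T) ≤ y T ∧ 0 ≤ z T ^ 2 / (2 * T) ∧
    (y T = 0 ↔ ∀ t ∈ Icc 0 T, z t = 0) := by
  have hy_engel : ∀ t ∈ Icc 0 T, HasDerivAt y (z t * x' t) t := fun t ht => hD1 t ht ▸ hy t ht
  have hz_engel : ∀ t ∈ Icc 0 T, HasDerivAt z (t * x' t) t := fun t ht => hD2 t ht ▸ hz t ht
  have hyT := eq_sq_div_add_integral_of_engel hT.le hy_engel hz_engel hy0 hz0
  have hg : ContinuousOn (fun t => z t ^ 2 / (2 * t ^ 2)) (Icc 0 T) :=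
    ContinuousOn.sq_div_two_mul_sq_of_hasDerivAt_zero
      (fun t ht => (hz t ht).continuousAt.continuousWithinAt)
      (by simpa using hz_engel 0 ⟨le_rfl, hT.le⟩) hz0
  have hbdry : 0 ≤ z T ^ 2 / (2 * T) := by positivity
  have hint : 0 ≤ ∫ t in (0 : ℝ)..T, z t ^ 2 / (2 * t ^ 2) :=
    integral_nonneg hT.le fun t _ => by positivity
  refine ⟨hyT, by linarith, hbdry, ?_⟩
  rw [hyT, add_eq_zero_iff_of_nonneg hbdry hint,
    integral_eq_zero_iff_of_continuousOn_of_nonneg hT hg fun t _ => by positivity]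
  constructor
  · rintro ⟨-, hzero⟩ t ht
    rcases eq_or_ne t 0 with rfl | ht₀
    · exact hz0
    · simpa [ht₀] using hzero ht
  · intro hzero
    exact ⟨by simp [hzero T ⟨hT.le, le_rfl⟩], fun t ht => by simp [hzero t ht]⟩

/-- **Inaba's integral formula for the accessible set.**
For a C¹ curve `(x(t), y(t), z(t), t)`, `t ∈ [0,T]`, tangent to the standard Engel
structure (`y' = z·x'`, `z' = t·x'`) and starting at the origin, one has
`y(T) = z(T)²/(2T) + ∫₀ᵀ z(t)²/(2t²) dt`; in particular `y(T) ≥ z(T)²/(2T) ≥ 0`,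
with `y(T) = 0` if and only if `z ≡ 0` on `[0,T]`. -/
theorem inaba_integral_formula
    {T : ℝ} (hT : 0 < T)
    (x y z x' y' z' : ℝ → ℝ)
    (hx : ∀ t ∈ Icc 0 T, HasDerivAt x (x' t) t)
    (hy : ∀ t ∈ Icc 0 T, HasDerivAt y (y' t) t)
    (hz : ∀ t ∈ Icc 0 T, HasDerivAt z (z' t) t)
    (hx' : ContinuousOn x' (Icc 0 T))
    (hy' : ContinuousOn y' (Icc 0 T))
    (hz' : ContinuousOn z' (Icc 0 T))
    (hD1 : ∀ t ∈ Icc 0 T, y' t = z t * x' t)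
    (hD2 : ∀ t ∈ Icc 0 T, z' t = t * x' t)
    (hx0 : x 0 = 0) (hy0 : y 0 = 0) (hz0 : z 0 = 0) :
    (y T = z T ^ 2 / (2 * T) + ∫ t in (0 : ℝ)..T, z t ^ 2 / (2 * t ^ 2)) ∧
    z T ^ 2 / (2 * T) ≤ y T ∧ 0 ≤ z T ^ 2 / (2 * T) ∧
    (y T = 0 ↔ ∀ t ∈ Icc 0 T, z t = 0) :=
  inaba_integral_formula_general hT y z x' y' z' hy hz hD1 hD2 hy0 hz0
end
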